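/- Every non-trivial congruence on the semigroup I^cf_λ is a group congruence: if C is a congruence on I^cf_λ distinct from the identity congruence and from the universal congruence, then the quotient semigroup I^cf_λ/C is a group. -/

import Mathlib

/-!
The idempotents of the inverse monoid `Icf ι` are the partial identities `ofSet s` of cofinite
sets `s`, and `α * α.symm`, `α.symm * α` are idempotents, so it suffices to show that a
congruence `c` relating two distinct elements relates `1` to every `ofSet s`.

If `α ~ β` with `α ≠ β`, then `ofSet (ran α) = α.symm * α ~ α.symm * β`, which moves some point
of `ran α`; cutting this down by idempotents yields `ofSet s ~ ofSet t` and a point `a ∈ s \ t`.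
Since `ι` is infinite, `s` is the range of an injection `g : ι → ι`, and `g x = a` can be
prescribed for any `x`. Conjugating by `g` gives `1 ~ ofSet (g ⁻¹' t)` with `x ∉ g ⁻¹' t`, hence
`1 ~ ofSet {x}ᶜ`, and products of these give `1 ~ ofSet s` for every cofinite `s`.
-/

open Function Set

namespace IcfPaper

variable {ι : Type*}

lemma trans_none_finite {f g : ι ≃. ι}
    (hf : {a | f a = none}.Finite) (hg : {b | g b = none}.Finite) :
    {a | (f.trans g) a = none}.Finite := by
  have hsub : {a | (f.trans g) a = none} ⊆
      {a | f a = none} ∪ ⋃ b ∈ {b | g b = none}, {a | f.symm b = some a} := by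
    intro a ha
    simp only [Set.mem_setOf_eq] at ha
    rcases hfa : f a with _ | b
    · exact Or.inl hfa
    · have hg' : g b = none := by
        have : (f.trans g) a = (f a).bind g := rfl
        rw [this, hfa, Option.bind_some] at ha
        exact ha
      refine Or.inr ?_
      refine Set.mem_biUnion hg' ?_
      exact (PEquiv.eq_some_iff f).2 hfa
  refine Set.Finite.subset (hf.union (hg.biUnion ?_)) hsub
  intro b _
  apply Set.Subsingleton.finite
  intro a1 h1 a2 h2
  simp only [Set.mem_setOf_eq] at h1 h2
  rw [h1] at h2
  exact Option.some_injective _ h2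

/-- The monoid of injective partial selfmaps of `ι` with cofinite domain and range. -/
def Icf (ι : Type*) : Type _ :=
  {f : ι ≃. ι // {a | f a = none}.Finite ∧ {b | f.symm b = none}.Finite}

namespace Icf

instance : Monoid (Icf ι) where
  mul f g := ⟨f.1.trans g.1, trans_none_finite f.2.1 g.2.1, by
      rw [PEquiv.symm_trans_rev]
      exact trans_none_finite g.2.2 f.2.2⟩
  one := ⟨PEquiv.refl ι, by
      constructor <;>
      · convert Set.finite_empty
        ext a
        simp only [Set.mem_setOf_eq, Set.mem_empty_iff_false, iff_false]
        intro h
        simp at h⟩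
  mul_assoc a b c := Subtype.ext (PEquiv.trans_assoc _ _ _)
  one_mul a := Subtype.ext (PEquiv.refl_trans _)
  mul_one a := Subtype.ext (PEquiv.trans_refl _)

/-- The domain of an element of `Icf ι`. -/
def dom (f : Icf ι) : Set ι := {a | (f.1 a).isSome}

/-- The range of an element of `Icf ι`. -/
def ran (f : Icf ι) : Set ι := {b | (f.1.symm b).isSome}

/-- `d̄ f`, the number of points of `ι` outside of the domain of `f`. -/
noncomputable def dbar (f : Icf ι) : ℕ := (dom f)ᶜ.ncard

/-- `r̄ f`, the number of points of `ι` outside of the range of `f`. -/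
noncomputable def rbar (f : Icf ι) : ℕ := (ran f)ᶜ.ncard

end Icf

/-- The bicyclic semigroup `⟨p, q | pq = 1⟩`, realized as `ℕ × ℕ` with the operation
`(a,b)(c,d) = (a - b + max(b,c), d - c + max(b,c))`. -/
def Bicyclic : Type := ℕ × ℕ

instance : Mul Bicyclic :=
  ⟨fun x y => (x.1 - x.2 + max x.2 y.1, y.2 - y.1 + max x.2 y.1)⟩

namespace Icf

open Filter

section

open scoped Classical

theorem ext {f g : Icf ι} (h : ∀ x, f.1 x = g.1 x) : f = g :=
  Subtype.ext (PEquiv.ext h)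

theorem mul_apply (f g : Icf ι) (x : ι) : (f * g).1 x = (f.1 x).bind g.1 := rfl

theorem one_apply (x : ι) : (1 : Icf ι).1 x = some x := rfl

theorem mem_dom {f : Icf ι} {x : ι} : x ∈ dom f ↔ ∃ y, f.1 x = some y :=
  Option.isSome_iff_exists

theorem dom_mem_cofinite (f : Icf ι) : dom f ∈ cofinite :=
  f.2.1.subset fun _ hx => Option.not_isSome_iff_eq_none.1 hx

theorem ran_mem_cofinite (f : Icf ι) : ran f ∈ cofinite :=
  f.2.2.subset fun _ hx => Option.not_isSome_iff_eq_none.1 hx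

def symm (f : Icf ι) : Icf ι := ⟨f.1.symm, f.2.2, f.2.1⟩

theorem symm_apply (f : Icf ι) (y : ι) : f.symm.1 y = f.1.symm y := rfl

theorem ran_symm (f : Icf ι) : ran f.symm = dom f := rfl

noncomputable def ofSet (s : Set ι) (hs : s ∈ cofinite) : Icf ι :=
  have h : {a | PEquiv.ofSet s a = none}.Finite :=
    hs.subset fun a ha has => by simp [PEquiv.ofSet, has] at ha
  ⟨PEquiv.ofSet s, h, h⟩

theorem ofSet_apply (s : Set ι) (hs : s ∈ cofinite) (x : ι) :
    (ofSet s hs).1 x = if x ∈ s then some x else none := rfl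

theorem ofSet_congr {s t : Set ι} (h : s = t) (hs : s ∈ cofinite) (ht : t ∈ cofinite) :
    ofSet s hs = ofSet t ht := by
  subst h; rfl

theorem ofSet_univ : ofSet (univ : Set ι) univ_mem = 1 :=
  ext fun x => by simp [ofSet_apply, one_apply]

theorem ofSet_mul_ofSet (s t : Set ι) (hs : s ∈ cofinite) (ht : t ∈ cofinite) :
    ofSet s hs * ofSet t ht = ofSet (s ∩ t) (inter_mem hs ht) :=
  ext fun x => by
    by_cases hxs : x ∈ s <;> by_cases hxt : x ∈ t <;> simp [mul_apply, ofSet_apply, hxs, hxt]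

theorem mul_symm_self (f : Icf ι) : f * f.symm = ofSet (dom f) f.dom_mem_cofinite :=
  ext fun x => by
    rcases hfx : f.1 x with _ | y
    · simp [mul_apply, ofSet_apply, dom, hfx]
    · simp [mul_apply, ofSet_apply, dom, hfx, symm_apply, (PEquiv.eq_some_iff f.1).2 hfx]

theorem symm_mul_self (f : Icf ι) : f.symm * f = ofSet (ran f) f.ran_mem_cofinite :=
  mul_symm_self f.symm

theorem mul_ofSet_of_ran_subset {f : Icf ι} {s : Set ι} (hs : s ∈ cofinite) (h : ran f ⊆ s) :
    f * ofSet s hs = f :=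
  ext fun x => by
    rcases hfx : f.1 x with _ | y
    · simp [mul_apply, hfx]
    · have hy : y ∈ s := h (by simp [ran, (PEquiv.eq_some_iff f.1).2 hfx])
      simp [mul_apply, hfx, ofSet_apply, hy]

noncomputable def ofInjective (g : ι → ι) (hg : Injective g) (hran : range g ∈ cofinite) :
    Icf ι :=
  ⟨{ toFun := fun a => some (g a)
     invFun := partialInv g
     inv := fun a b => (hg.isPartialInv a b).trans Option.some_inj.symm },
   Set.finite_empty.subset fun _ ha => Option.some_ne_none _ ha,
   hran.subset fun _ hb ⟨a, hab⟩ => by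
     subst hab; exact Option.some_ne_none _ ((partialInv_left hg a).symm.trans hb)⟩

theorem ofInjective_apply {g : ι → ι} (hg : Injective g) (hran : range g ∈ cofinite) (x : ι) :
    (ofInjective g hg hran).1 x = some (g x) := rfl

theorem ofInjective_symm_apply {g : ι → ι} (hg : Injective g) (hran : range g ∈ cofinite)
    (y : ι) : (ofInjective g hg hran).symm.1 y = partialInv g y := rfl

theorem ofInjective_mul_ofSet_mul_symm {g : ι → ι} (hg : Injective g) (hran : range g ∈ cofinite)
    (s : Set ι) (hs : s ∈ cofinite) :
    ofInjective g hg hran * ofSet s hs * (ofInjective g hg hran).symm =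
      ofSet (g ⁻¹' s) (mem_cofinite.2 (hs.preimage hg.injOn)) :=
  ext fun x => by
    by_cases hx : g x ∈ s <;>
      simp [mul_apply, ofSet_apply, ofInjective_apply, ofInjective_symm_apply, hx,
        partialInv_left hg]

theorem exists_injective_range_eq [Infinite ι] {s : Set ι} (hs : s ∈ cofinite) (x : ι) {a : ι}
    (ha : a ∈ s) : ∃ g : ι → ι, Injective g ∧ range g = s ∧ g x = a := by
  have hcard : Cardinal.mk (sᶜ : Set ι) < Cardinal.mk ι :=
    (Cardinal.lt_aleph0_iff_set_finite.2 hs).trans_le (Cardinal.aleph0_le_mk ι)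
  obtain ⟨π⟩ : Nonempty (ι ≃ s) := by
    simpa using Cardinal.eq.1 (Cardinal.mk_compl_of_infinite _ hcard).symm
  let σ := (Equiv.swap x (π.symm ⟨a, ha⟩)).trans π
  refine ⟨Subtype.val ∘ σ, Subtype.val_injective.comp σ.injective, ?_, by simp [σ]⟩
  rw [range_comp, σ.range_eq_univ, image_univ, Subtype.range_coe]

end

section Congruence

variable {c : Con (Icf ι)}

theorem rel_ofSet_dom {s : Set ι} {hs : s ∈ cofinite} {δ : Icf ι} (h : c (ofSet s hs) δ)
    (hδ : dom δ ⊆ s) : c (ofSet s hs) (ofSet (dom δ) δ.dom_mem_cofinite) := by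
  have h₁ : c δ.symm (ofSet (ran δ) δ.ran_mem_cofinite) := by
    simpa only [mul_ofSet_of_ran_subset hs ((ran_symm δ).trans_subset hδ), symm_mul_self]
      using c.mul (c.refl δ.symm) h
  have h₂ : c (ofSet (dom δ) δ.dom_mem_cofinite) δ := by
    simpa only [mul_ofSet_of_ran_subset _ subset_rfl, mul_symm_self] using c.mul (c.refl δ) h₁
  exact c.trans h (c.symm h₂)

theorem exists_rel_ofSet_of_apply_ne {r : Set ι} {hr : r ∈ cofinite} {γ : Icf ι}
    (h : c (ofSet r hr) γ) {y : ι} (hyr : y ∈ r) (hγy : γ.1 y ≠ some y) :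
    ∃ s t hs ht, y ∈ s ∧ y ∉ t ∧ c (ofSet s hs) (ofSet t ht) := by
  have hfin : {w | γ.1 y = some w}.Finite :=
    Set.Subsingleton.finite fun _ hv _ hw => Option.some_injective _ (hv.symm.trans hw)
  -- removing the image of `y` from `r` makes `ofSet s * γ * ofSet s` undefined at `y ∈ s`
  set s := r ∩ {w | γ.1 y = some w}ᶜ
  have hs : s ∈ cofinite := inter_mem hr hfin.compl_mem_cofinite
  set δ := ofSet s hs * γ * ofSet s hs
  have hδ : c (ofSet s hs) δ := by
    have := c.mul (c.mul (c.refl (ofSet s hs)) h) (c.refl (ofSet s hs))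
    rwa [ofSet_mul_ofSet, ofSet_mul_ofSet,
      ofSet_congr (by simp [s, inter_comm, inter_left_comm] : s ∩ r ∩ s = s) _ hs] at this
  have hδ_dom : dom δ ⊆ s := fun x hx => by
    by_contra hxs
    simp [mem_dom, δ, mul_apply, ofSet_apply, hxs] at hx
  have hys : y ∈ s := ⟨hyr, hγy⟩
  have hyδ : y ∉ dom δ := fun hy => by
    rcases hγ : γ.1 y with _ | w
    · simp [mem_dom, δ, mul_apply, ofSet_apply, hys, hγ] at hy
    · have hws : w ∉ s := fun hw => hw.2 hγ
      simp [mem_dom, δ, mul_apply, ofSet_apply, hys, hγ, hws] at hy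
  exact ⟨s, dom δ, hs, δ.dom_mem_cofinite, hys, hyδ, rel_ofSet_dom hδ hδ_dom⟩

theorem exists_rel_ofSet_of_ne {α β : Icf ι} (h : c α β) (hne : α ≠ β) :
    ∃ s t hs ht, (s \ t).Nonempty ∧ c (ofSet s hs) (ofSet t ht) := by
  wlog hxy : ∃ x y, α.1 x = some y ∧ β.1 x ≠ some y generalizing α β
  · push Not at hxy
    obtain ⟨x, hx⟩ : ∃ x, α.1 x ≠ β.1 x := by
      by_contra! hall
      exact hne (ext hall)
    refine this (c.symm h) hne.symm ⟨x, ?_⟩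
    rcases hβ : β.1 x with _ | z
    · rcases hα : α.1 x with _ | y
      · exact absurd (hα.trans hβ.symm) hx
      · simpa [hβ] using hxy x y hα
    · exact ⟨z, rfl, fun hα => hx (hα.trans hβ.symm)⟩
  obtain ⟨x, y, hαx, hβx⟩ := hxy
  have hαy : α.1.symm y = some x := (PEquiv.eq_some_iff α.1).2 hαx
  have hγ : c (ofSet (ran α) α.ran_mem_cofinite) (α.symm * β) := by
    simpa only [symm_mul_self] using c.mul (c.refl α.symm) h
  have hy : y ∈ ran α := by simp [ran, hαy]
  have hγy : (α.symm * β).1 y ≠ some y := by simpa [mul_apply, symm_apply, hαy] using hβx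
  obtain ⟨s, t, hs, ht, hys, hyt, hst⟩ := exists_rel_ofSet_of_apply_ne hγ hy hγy
  exact ⟨s, t, hs, ht, ⟨y, hys, hyt⟩, hst⟩

theorem rel_one_ofSet_of_subset {s t : Set ι} {hs : s ∈ cofinite} {ht : t ∈ cofinite}
    (h : c 1 (ofSet t ht)) (hts : t ⊆ s) : c 1 (ofSet s hs) := by
  have := c.mul (c.refl (ofSet s hs)) h
  rw [mul_one, ofSet_mul_ofSet, ofSet_congr (inter_eq_right.2 hts) _ ht] at this
  exact c.trans h (c.symm this)

theorem rel_one_ofSet_compl_singleton [Infinite ι] {s t : Set ι} {hs : s ∈ cofinite}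
    {ht : t ∈ cofinite} (h : c (ofSet s hs) (ofSet t ht)) {a : ι} (has : a ∈ s) (hat : a ∉ t)
    (x : ι) : c 1 (ofSet {x}ᶜ (finite_singleton x).compl_mem_cofinite) := by
  obtain ⟨g, hg, hran, hgx⟩ := exists_injective_range_eq hs x has
  set f := ofInjective g hg (hran ▸ hs)
  have hconj := c.mul (c.mul (c.refl f) h) (c.refl f.symm)
  rw [ofInjective_mul_ofSet_mul_symm, ofInjective_mul_ofSet_mul_symm,
    ofSet_congr (by rw [← hran, preimage_range]) _ univ_mem, ofSet_univ] at hconj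
  exact rel_one_ofSet_of_subset hconj fun y hy (hyx : y = x) => hat (hgx ▸ hyx ▸ hy)

theorem rel_one_ofSet
    (h : ∀ x : ι, c 1 (ofSet {x}ᶜ (finite_singleton x).compl_mem_cofinite))
    {s : Set ι} (hs : s ∈ cofinite) : c 1 (ofSet s hs) := by
  suffices ∀ F : Set ι, (hF : F.Finite) → c 1 (ofSet Fᶜ hF.compl_mem_cofinite) by
    simpa only [ofSet_congr (compl_compl s) _ hs] using this sᶜ hs
  intro F hF
  induction F, hF using Set.Finite.induction_on with
  | empty => simpa only [ofSet_congr compl_empty _ univ_mem, ofSet_univ] using c.refl 1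
  | @insert a F _ _ ih =>
    have := c.mul ih (h a)
    rwa [one_mul, ofSet_mul_ofSet, ofSet_congr (by rw [← compl_union, union_comm, ← insert_eq])]
      at this

end Congruence

end Icf

theorem statement14_general {ι : Type*} [Infinite ι] (c : Con (Icf ι))
    (hne_id : ∃ α β : Icf ι, c α β ∧ α ≠ β) :
    ∀ x : c.Quotient, ∃ y : c.Quotient, x * y = 1 ∧ y * x = 1 := by
  obtain ⟨α, β, hαβ, hne⟩ := hne_id
  obtain ⟨s, t, hs, ht, ⟨a, has, hat⟩, hst⟩ := Icf.exists_rel_ofSet_of_ne hαβ hne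
  have hsingleton := Icf.rel_one_ofSet_compl_singleton hst has hat
  intro x
  induction x using Con.induction_on with
  | H γ =>
    refine ⟨γ.symm, ?_, ?_⟩
    · rw [← Con.coe_mul, ← Con.coe_one, Con.eq, Icf.mul_symm_self]
      exact c.symm (Icf.rel_one_ofSet hsingleton _)
    · rw [← Con.coe_mul, ← Con.coe_one, Con.eq, Icf.symm_mul_self]
      exact c.symm (Icf.rel_one_ofSet hsingleton _)

/-- Every non-trivial congruence on `Icf ι` is a group congruence. -/
theorem statement14 {ι : Type*} [Infinite ι] (c : Con (Icf ι))
    (hne_id : ∃ α β : Icf ι, c α β ∧ α ≠ β)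
    (hne_univ : ∃ α β : Icf ι, ¬ c α β) :
    ∀ x : c.Quotient, ∃ y : c.Quotient, x * y = 1 ∧ y * x = 1 :=
  statement14_general c hne_id

end IcfPaper
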